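/- arXiv:2605.28413 — 7 statements merged into one kernel-verified Lean document; each statement's English description precedes it below -/
import Mathlib

section
/- In a partial infinitary semigroup, if ∏_{i∈I} a_i is defined and H is a nonempty convex subset of the linearly ordered index set I, then ∏_{i∈H} a_i (with the induced order on H) is also defined. -/
/-!
Collapse `H` to one of its points `c`: the map sending `H` to `c` and fixing every other index
is monotone because `H` is convex, and its fiber over `c` is exactly `H`. Generalized
associativity along this map (onto its range) makes the product over that fiber defined.
-/

/-- A partial infinitary semigroup: a type `S` with a partial product
(`none` = undefined) on sequences indexed by linearly ordered types, satisfying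
(U) singleton products are defined and equal the unique entry, and
(N) generalized associativity under surjective order-preserving maps. -/
structure PartialInfSemigroup (S : Type) : Type 1 where
  prod : ∀ (I : Type) [LinearOrder I], (I → S) → Option S
  unit : ∀ (I : Type) [LinearOrder I] (a : I → S) (i : I),
      (∀ j, j = i) → prod I a = some (a i)
  assoc : ∀ (I J : Type) [LinearOrder I] [LinearOrder J] (a : I → S) (π : I → J),
      Function.Surjective π → Monotone π → ∀ s : S, prod I a = some s →
      ∃ p : J → S,
        (∀ j : J, prod {i : I // π i = j} (fun i => a i.1) = some (p j)) ∧
        prod J p = some s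

namespace PartialInfSemigroup

variable {S : Type} (P : PartialInfSemigroup S)

lemma prod_subtype_congr {I : Type} [LinearOrder I] (a : I → S) {p q : I → Prop} (h : p = q) :
    P.prod {i : I // p i} (fun i => a i.1) = P.prod {i : I // q i} (fun i => a i.1) := by
  subst h; rfl

theorem exists_prod_fiber_eq_some {I J : Type} [LinearOrder I] [LinearOrder J] {a : I → S}
    {s : S} (h : P.prod I a = some s) {f : I → J} (hf : Monotone f) {j : J}
    (hj : j ∈ Set.range f) :
    ∃ t : S, P.prod {i : I // f i = j} (fun i => a i.1) = some t := by
  obtain ⟨p, hp, -⟩ := P.assoc I (Set.range f) a (Set.rangeFactorization f)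
    Set.rangeFactorization_surjective (fun _ _ hxy => hf hxy) s h
  have hfiber : (fun i => Set.rangeFactorization f i = ⟨j, hj⟩) = (fun i => f i = j) :=
    funext fun i => propext Subtype.ext_iff
  exact ⟨p ⟨j, hj⟩, P.prod_subtype_congr a hfiber ▸ hp ⟨j, hj⟩⟩

end PartialInfSemigroup

namespace Set

variable {I : Type} {H : Set I} [DecidablePred (· ∈ H)] {c : I}

theorem ite_mem_eq_iff_mem (hc : c ∈ H) (i : I) : (if i ∈ H then c else i) = c ↔ i ∈ H := by
  by_cases hi : i ∈ H
  · simp [hi]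
  · simp only [hi, if_false, iff_false]
    rintro rfl
    exact hi hc

theorem OrdConnected.monotone_ite_mem [LinearOrder I] (hH : H.OrdConnected) (hc : c ∈ H) :
    Monotone fun i => if i ∈ H then c else i := by
  intro x y hxy
  by_cases hx : x ∈ H <;> by_cases hy : y ∈ H <;> simp only [hx, hy, if_true, if_false]
  · exact le_rfl
  · exact not_lt.1 fun hyc => hy (hH.out hx hc ⟨hxy, hyc.le⟩)
  · exact not_lt.1 fun hcx => hx (hH.out hc hy ⟨hcx.le, hxy⟩)
  · exact hxy

end Set

/-- If a product is defined and `H` is a nonempty convex subset of the index set,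
then the product over `H` (with the induced order) is defined too. -/
theorem stmt1 {S : Type} (P : PartialInfSemigroup S)
    (I : Type) [LinearOrder I] (a : I → S) (s : S)
    (h : P.prod I a = some s)
    (H : Set I) (hne : H.Nonempty)
    (hconv : ∀ x y z : I, x ∈ H → y ∈ H → x < z → z < y → z ∈ H) :
    ∃ t : S, P.prod {i : I // i ∈ H} (fun i => a i.1) = some t := by
  classical
  obtain ⟨c, hc⟩ := hne
  have hH : H.OrdConnected :=
    Set.ordConnected_of_Ioo fun x hx y hy _ z ⟨hxz, hzy⟩ => hconv x y z hx hy hxz hzy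
  have hfiber : (fun i => (if i ∈ H then c else i) = c) = (fun i => i ∈ H) :=
    funext fun i => propext (Set.ite_mem_eq_iff_mem hc i)
  rw [← P.prod_subtype_congr a hfiber]
  exact P.exists_prod_fiber_eq_some h (hH.monotone_ite_mem hc) ⟨c, if_pos hc⟩
end

section
/- Suppose S is a partial infinitary semigroup, a, b, e ∈ S, the product a*b*a*b*a*... indexed by ω is defined, and the identities a*b = e = b*a, a*e = a, b*e = b, and ∏_{n∈ω} e = e hold (where all displayed finite products are defined). Then a = e and b = e. -/
namespace PartialInfSemigroup

variable {S : Type} (P : PartialInfSemigroup S)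

theorem prod_eq_of_fibers {I J : Type} [LinearOrder I] [LinearOrder J] {u : I → S} {s : S}
    (hu : P.prod I u = some s) {π : I → J} (hsurj : Function.Surjective π) (hmono : Monotone π)
    {p : J → S} (hp : ∀ j, P.prod {i // π i = j} (fun i => u i) = some (p j)) :
    P.prod J p = some s := by
  obtain ⟨p', hp', hs⟩ := P.assoc I J u π hsurj hmono s hu
  have : p' = p := funext fun j => Option.some.inj ((hp' j).symm.trans (hp j))
  rwa [this] at hs

theorem prod_of_prod_comp_orderIso {I J : Type} [LinearOrder I] [LinearOrder J] (f : I ≃o J)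
    (u : J → S) {s : S} (h : P.prod I (u ∘ f) = some s) : P.prod J u = some s := by
  refine P.prod_eq_of_fibers h f.surjective f.monotone fun j => ?_
  have hj := P.unit {i // f i = j} (fun i => u (f i)) ⟨f.symm j, f.apply_symm_apply j⟩
    fun i => Subtype.ext (by simp [← i.2])
  simpa using hj

theorem prod_comp_orderIso {I J : Type} [LinearOrder I] [LinearOrder J] (f : I ≃o J)
    (u : J → S) : P.prod I (u ∘ f) = P.prod J u := by
  cases h : P.prod J u with
  | some s =>
    refine P.prod_of_prod_comp_orderIso f.symm (u ∘ f) ?_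
    simpa [Function.comp_def] using h
  | none =>
    cases h' : P.prod I (u ∘ f) with
    | none => rfl
    | some s => simpa [h] using P.prod_of_prod_comp_orderIso f u h'

theorem prod_subtype_of_iff_eq {I : Type} [LinearOrder I] {p : I → Prop} {i : I}
    (hp : ∀ j, p j ↔ j = i) (u : I → S) : P.prod {j // p j} (fun j => u j) = some (u i) :=
  P.unit _ _ ⟨i, (hp i).2 rfl⟩ fun j => Subtype.ext ((hp j).1 j.2)

theorem prod_subtype_nat_Ico {p : ℕ → Prop} {m k : ℕ} (hp : ∀ n, p n ↔ m ≤ n ∧ n < m + k)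
    (u : ℕ → S) : P.prod {n // p n} (fun n => u n) = P.prod (Fin k) (fun i => u (m + i)) := by
  let f : Fin k → {n // p n} := fun i => ⟨m + i, (hp _).2 ⟨by omega, by omega⟩⟩
  have hf : StrictMono f := fun i j h => by simpa [f] using h
  have hsurj : Function.Surjective f := fun n => by
    obtain ⟨h₁, h₂⟩ := (hp n).1 n.2
    exact ⟨⟨n - m, by omega⟩, Subtype.ext (by simp [f]; omega)⟩
  exact (P.prod_comp_orderIso (hf.orderIsoOfSurjective f hsurj) _).symm

theorem prod_subtype_nat_Ici {p : ℕ → Prop} {m : ℕ} (hp : ∀ n, p n ↔ m ≤ n)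
    (u : ℕ → S) : P.prod {n // p n} (fun n => u n) = P.prod ℕ (fun i => u (m + i)) := by
  let f : ℕ → {n // p n} := fun i => ⟨m + i, (hp _).2 (by omega)⟩
  have hf : StrictMono f := fun i j h => by simpa [f] using h
  have hsurj : Function.Surjective f := fun n =>
    ⟨n - m, Subtype.ext (by have := (hp n).1 n.2; simp [f]; omega)⟩
  exact (P.prod_comp_orderIso (hf.orderIsoOfSurjective f hsurj) _).symm

theorem prod_subtype_nat_pair {p : ℕ → Prop} {m : ℕ} (hp : ∀ n, p n ↔ m ≤ n ∧ n < m + 2)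
    (u : ℕ → S) : P.prod {n // p n} (fun n => u n) = P.prod (Fin 2) ![u m, u (m + 1)] := by
  rw [P.prod_subtype_nat_Ico hp]
  congr 1
  funext i
  fin_cases i <;> rfl

theorem prod_pairs {u v : ℕ → S} {w : S} (hu : P.prod ℕ u = some w)
    (hv : ∀ j, P.prod (Fin 2) ![u (2 * j), u (2 * j + 1)] = some (v j)) :
    P.prod ℕ v = some w :=
  P.prod_eq_of_fibers hu (π := fun n => n / 2) (fun j => ⟨2 * j, by dsimp only; omega⟩)
    (fun _ _ h => Nat.div_le_div_right h)
    fun j => (P.prod_subtype_nat_pair (fun n => by omega) u).trans (hv j)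

theorem prod_head_pairs {u v : ℕ → S} {w : S} (hu : P.prod ℕ u = some w) (hv₀ : v 0 = u 0)
    (hv : ∀ j, P.prod (Fin 2) ![u (2 * j + 1), u (2 * j + 2)] = some (v (j + 1))) :
    P.prod ℕ v = some w := by
  refine P.prod_eq_of_fibers hu (π := fun n => (n + 1) / 2)
    (fun j => ⟨2 * j, by dsimp only; omega⟩)
    (fun _ _ h => Nat.div_le_div_right (Nat.add_le_add_right h 1)) fun j => ?_
  cases j with
  | zero => rw [hv₀]; exact P.prod_subtype_of_iff_eq (fun n => by omega) u
  | succ j => exact (P.prod_subtype_nat_pair (fun n => by omega) u).trans (hv j)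

theorem prod_head_tail {u : ℕ → S} {w t : S} (hu : P.prod ℕ u = some w)
    (ht : P.prod ℕ (fun n => u (n + 1)) = some t) : P.prod (Fin 2) ![u 0, t] = some w := by
  refine P.prod_eq_of_fibers hu (π := fun n => if n = 0 then 0 else 1)
    (fun j => ⟨j.val, by fin_cases j <;> rfl⟩) (fun x y h => ?_) (Fin.forall_fin_two.2 ⟨?_, ?_⟩)
  · dsimp only
    split_ifs <;> omega
  · exact P.prod_subtype_of_iff_eq (fun n => by split_ifs <;> simp_all) u
  · rw [P.prod_subtype_nat_Ici (m := 1) (fun n => by split_ifs <;> simp_all; omega) u]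
    simpa [add_comm] using ht

end PartialInfSemigroup

/-- If `abab⋯` (indexed by ω) is defined and `ab = e = ba`, `ae = a`, `be = b`,
`ee⋯ = e`, then `a = e = b`. -/
theorem stmt4 {S : Type} (P : PartialInfSemigroup S) (a b e : S)
    (hab : P.prod (Fin 2) ![a, b] = some e)
    (hba : P.prod (Fin 2) ![b, a] = some e)
    (hae : P.prod (Fin 2) ![a, e] = some a)
    (hbe : P.prod (Fin 2) ![b, e] = some b)
    (hee : P.prod ℕ (fun _ => e) = some e)
    (habω : ∃ w : S, P.prod ℕ (fun n => if Even n then a else b) = some w) :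
    a = e ∧ b = e := by
  obtain ⟨w, hw⟩ := habω
  have hew : e = w := Option.some.inj <| hee.symm.trans <|
    P.prod_pairs hw fun j => by simpa [Nat.not_even_two_mul_add_one] using hab
  have haw : a = w := by
    have haeee := P.prod_head_pairs hw (v := fun n => if n = 0 then a else e) (by simp)
      fun j => by simpa [Nat.not_even_two_mul_add_one, Nat.even_add_one] using hba
    have hae_w : P.prod (Fin 2) ![a, e] = some w := by
      simpa using P.prod_head_tail haeee (by simpa using hee)
    exact Option.some.inj (hae.symm.trans hae_w)
  have ha : a = e := haw.trans hew.symm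
  refine ⟨ha, Option.some.inj (hbe.symm.trans ?_)⟩
  rwa [ha] at hba
end

section
/- If S is a partial infinitary semigroup, a, c, e ∈ S, a ≠ e, e is a neutral element for the binary operation, and the product aaaa...c of order type ω+1 (a at every position below ω, c at position ω) is defined, then this product does not equal e. -/
/-- If `e` is neutral, `a ≠ e`, and the product `aaa⋯c` of order type ω+1 is
defined, then it does not equal `e`. -/
theorem stmt7 {S : Type} (P : PartialInfSemigroup S) (a c e : S) (ha : a ≠ e)
    (hneut : ∀ x : S, P.prod (Fin 2) ![x, e] = some x ∧ P.prod (Fin 2) ![e, x] = some x)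
    (s : S)
    (hs : P.prod (WithTop ℕ) (fun x => if x = ⊤ then c else a) = some s) :
    s ≠ e := by
  intro hse
  rw [hse] at hs
  classical
  -- Step 1: split off the first element via π : WithTop ℕ → Fin 2
  obtain ⟨p, hp, hprodp⟩ := P.assoc (WithTop ℕ) (Fin 2)
    (fun x => if x = ⊤ then c else a)
    (fun i => if i = 0 then (0 : Fin 2) else 1)
    (by
      intro j
      fin_cases j
      · exact ⟨0, by simp⟩
      · exact ⟨⊤, by simp⟩)
    (by
      intro i j hij
      by_cases hi : i = 0
      · simp only [hi, if_pos rfl]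
        exact Fin.zero_le _
      · have hj : j ≠ 0 := by
          intro h
          subst h
          exact hi (le_antisymm hij (zero_le : 0 ≤ i))
        simp [hi, hj])
    e hs
  -- p 0 = a
  have hp0 : p 0 = a := by
    have hu := P.unit {i : WithTop ℕ // (if i = 0 then (0 : Fin 2) else 1) = 0}
      (fun i => (fun x => if x = ⊤ then c else a) i.1) ⟨0, by simp⟩
      (by
        rintro ⟨j, hj⟩
        have hj0 : j = 0 := by
          by_contra h
          simp [h] at hj
        exact Subtype.ext hj0)
    have := (hu.symm.trans (hp 0))
    simp only [Option.some.injEq] at this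
    rw [← this]
    simp
  -- Step 2: transport the tail product back to WithTop ℕ
  have hp1 : p 1 = e := by
    obtain ⟨q, hq, hprodq⟩ := P.assoc
      {i : WithTop ℕ // (if i = 0 then (0 : Fin 2) else 1) = 1} (WithTop ℕ)
      (fun i => (fun x => if x = ⊤ then c else a) i.1)
      (fun i => WithTop.map Nat.pred i.1)
      (by
        intro j
        by_cases hj : j = ⊤
        · subst hj
          exact ⟨⟨⊤, by simp⟩, by simp⟩
        · obtain ⟨n, rfl⟩ := WithTop.ne_top_iff_exists.mp hj
          exact ⟨⟨WithTop.some (n + 1), by simp⟩, rfl⟩)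
      (by
        rintro ⟨i, hi⟩ ⟨j, hj⟩ hij
        have hij' : i ≤ j := hij
        induction j using WithTop.recTopCoe with
        | top => simp
        | coe m =>
            induction i using WithTop.recTopCoe with
            | top => exact absurd hij' (WithTop.not_top_le_coe m)
            | coe n =>
                simp only [WithTop.map_coe, WithTop.coe_le_coe] at *
                exact Nat.pred_le_pred hij')
      (p 1) (hp 1)
    -- q equals the original sequence
    have hqeq : q = fun x : WithTop ℕ => if x = ⊤ then c else a := by
      funext j
      by_cases hj : j = ⊤
      · subst hj
        have hu := P.unit
          {i : {i : WithTop ℕ // (if i = 0 then (0 : Fin 2) else 1) = 1} //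
            WithTop.map Nat.pred i.1 = (⊤ : WithTop ℕ)}
          (fun i => (fun i => (fun x => if x = ⊤ then c else a) i.1) i.1)
          ⟨⟨⊤, by simp⟩, by simp⟩
          (by
            rintro ⟨⟨k, hk⟩, hk2⟩
            have hk3 : k = ⊤ := by
              induction k using WithTop.recTopCoe with
              | top => rfl
              | coe m => simp [WithTop.map_coe] at hk2
            subst hk3
            rfl)
        have := (hu.symm.trans (hq ⊤))
        simp only [Option.some.injEq] at this
        rw [← this]
        simp
      · obtain ⟨n, rfl⟩ := WithTop.ne_top_iff_exists.mp hj
        have hu := P.unit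
          {i : {i : WithTop ℕ // (if i = 0 then (0 : Fin 2) else 1) = 1} //
            WithTop.map Nat.pred i.1 = WithTop.some n}
          (fun i => (fun i => (fun x => if x = ⊤ then c else a) i.1) i.1)
          ⟨⟨WithTop.some (n + 1), by simp⟩, rfl⟩
          (by
            rintro ⟨⟨k, hk⟩, hk2⟩
            have hk3 : k = WithTop.some (n + 1) := by
              induction k using WithTop.recTopCoe with
              | top => simp at hk2
              | coe m =>
                  have hm0 : m ≠ 0 := by
                    intro h
                    subst h
                    simp at hk
                  rw [WithTop.map_coe] at hk2
                  have hk4 : Nat.pred m = n := WithTop.coe_inj.mp hk2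
                  have : m = n + 1 := by
                    rw [Nat.pred_eq_sub_one] at hk4
                    omega
                  exact congrArg WithTop.some this
            apply Subtype.ext
            apply Subtype.ext
            exact hk3)
        have := (hu.symm.trans (hq (WithTop.some n)))
        simp only [Option.some.injEq] at this
        rw [← this]
        simp
    rw [hqeq] at hprodq
    have := hprodq.symm.trans hs
    exact (Option.some.injEq _ _ ▸ this)
  -- Step 3: conclude a = e, contradiction
  have hpeq : p = ![a, e] := by
    funext j
    fin_cases j
    · simpa using hp0
    · simpa using hp1
  rw [hpeq] at hprodp
  have := ((hneut a).1.symm.trans hprodp)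
  simp only [Option.some.injEq] at this
  exact ha this
end

section
/- Let S be a semigroup satisfying the identity a*b*c = a*c for all a, b, c ∈ S, and fix s₀, s₁ ∈ S. Define an infinitary product on nonempty linearly-indexed sequences by: ∏_{i∈I} a_i = a_i if I = {i}; a_i * a_j if I has minimum i and maximum j with i ≠ j; a_i * s₁ if I has minimum i and no maximum; s₀ * a_j if I has no minimum and maximum j; and s₀ * s₁ if I has neither minimum nor maximum. Then this product satisfies (U) and (N), making S a complete semigroup, and the binary product agrees with the original semigroup operation. -/
set_option linter.unusedSectionVars false

namespace Stmt9Aux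

noncomputable section
open Classical

/-- first factor: value at minimum, or `s₀` if no minimum. -/
def Lv {S : Type} (s₀ : S) (I : Type) [LinearOrder I] (a : I → S) : S :=
  if hm : ∃ i : I, ∀ k, i ≤ k then a hm.choose else s₀

/-- last factor: value at maximum, or `s₁` if no maximum. -/
def Rv {S : Type} (s₁ : S) (I : Type) [LinearOrder I] (a : I → S) : S :=
  if hM : ∃ j : I, ∀ k, k ≤ j then a hM.choose else s₁

/-- the infinitary product. -/
def iprod {S : Type} [Mul S] (s₀ s₁ : S) (I : Type) [LinearOrder I] (a : I → S) : Option S :=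
  if _ : Nonempty I then
    if hs : ∃ i : I, ∀ j, j = i then some (a hs.choose)
    else some (Lv s₀ I a * Rv s₁ I a)
  else none

variable {S : Type} [Mul S] {s₀ s₁ : S}

theorem min_unique {I : Type} [LinearOrder I] {i i' : I}
    (h : ∀ k, i ≤ k) (h' : ∀ k, i' ≤ k) : i = i' :=
  le_antisymm (h i') (h' i)

theorem max_unique {I : Type} [LinearOrder I] {i i' : I}
    (h : ∀ k, k ≤ i) (h' : ∀ k, k ≤ i') : i = i' :=
  le_antisymm (h' i) (h i')

theorem Lv_min {I : Type} [LinearOrder I] {a : I → S} {i : I} (h : ∀ k, i ≤ k) :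
    Lv s₀ I a = a i := by
  have he : ∃ i : I, ∀ k, i ≤ k := ⟨i, h⟩
  rw [Lv, dif_pos he]
  exact congrArg a (min_unique he.choose_spec h)

theorem Lv_none {I : Type} [LinearOrder I] {a : I → S} (h : ¬∃ i : I, ∀ k, i ≤ k) :
    Lv s₀ I a = s₀ := by rw [Lv, dif_neg h]

theorem Rv_max {I : Type} [LinearOrder I] {a : I → S} {j : I} (h : ∀ k, k ≤ j) :
    Rv s₁ I a = a j := by
  have he : ∃ j : I, ∀ k, k ≤ j := ⟨j, h⟩
  rw [Rv, dif_pos he]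
  exact congrArg a (max_unique he.choose_spec h)

theorem Rv_none {I : Type} [LinearOrder I] {a : I → S} (h : ¬∃ j : I, ∀ k, k ≤ j) :
    Rv s₁ I a = s₁ := by rw [Rv, dif_neg h]

theorem iprod_singleton {I : Type} [LinearOrder I] {a : I → S} {i : I}
    (h : ∀ j, j = i) : iprod s₀ s₁ I a = some (a i) := by
  have hne : Nonempty I := ⟨i⟩
  have hs : ∃ i : I, ∀ j, j = i := ⟨i, h⟩
  rw [iprod, dif_pos hne, dif_pos hs]
  exact congrArg (fun x => some (a x)) ((h hs.choose).symm ▸ rfl : hs.choose = i)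

theorem iprod_pair {I : Type} [LinearOrder I] {a : I → S}
    (hne : Nonempty I) (hs : ¬∃ i : I, ∀ j, j = i) :
    iprod s₀ s₁ I a = some (Lv s₀ I a * Rv s₁ I a) := by
  rw [iprod, dif_pos hne, dif_neg hs]

theorem iprod_empty {I : Type} [LinearOrder I] {a : I → S} (h : ¬ Nonempty I) :
    iprod s₀ s₁ I a = none := by rw [iprod, dif_neg h]

theorem iprod_some {I : Type} [LinearOrder I] {a : I → S} (hne : Nonempty I) :
    ∃ v, iprod s₀ s₁ I a = some v := by
  by_cases hs : ∃ i : I, ∀ j, j = i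
  · obtain ⟨i, hi⟩ := hs; exact ⟨a i, iprod_singleton hi⟩
  · exact ⟨_, iprod_pair hne hs⟩

theorem iprod_nonempty {I : Type} [LinearOrder I] {a : I → S} {s : S}
    (h : iprod s₀ s₁ I a = some s) : Nonempty I := by
  by_contra hne
  rw [iprod_empty hne] at h
  exact Option.some_ne_none s h.symm

/-- invariance under monotone bijections. -/
theorem iprod_transfer {I I' : Type} [LinearOrder I] [LinearOrder I']
    (e : I' → I) (hb : Function.Bijective e) (hmono : Monotone e) (a : I → S) :
    iprod s₀ s₁ I' (fun x => a (e x)) = iprod s₀ s₁ I a := by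
  have hsm : StrictMono e := hmono.strictMono_of_injective hb.1
  by_cases hne' : Nonempty I'
  · have hne : Nonempty I := hne'.map e
    by_cases hs' : ∃ x : I', ∀ y, y = x
    · obtain ⟨x, hx⟩ := hs'
      have hsI : ∀ j, j = e x := fun j => by
        obtain ⟨y, hy⟩ := hb.2 j
        rw [← hy, hx y]
      rw [iprod_singleton (i := x) hx, iprod_singleton hsI]
    · have hsI : ¬∃ i : I, ∀ j, j = i := by
        rintro ⟨i, hi⟩
        obtain ⟨x₀, hx₀⟩ := hb.2 i
        exact hs' ⟨x₀, fun y => hb.1 ((hi (e y)).trans hx₀.symm)⟩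
      rw [iprod_pair hne' hs', iprod_pair hne hsI]
      have hL : Lv s₀ I' (fun x => a (e x)) = Lv s₀ I a := by
        by_cases hm' : ∃ x : I', ∀ y, x ≤ y
        · obtain ⟨x, hx⟩ := hm'
          have hmI : ∀ k, e x ≤ k := fun k => by
            obtain ⟨y, hy⟩ := hb.2 k
            rw [← hy]; exact hmono (hx y)
          rw [Lv_min (a := fun x => a (e x)) hx, Lv_min hmI]
        · have hmI : ¬∃ i : I, ∀ k, i ≤ k := by
            rintro ⟨i, hi⟩
            obtain ⟨x₀, hx₀⟩ := hb.2 i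
            exact hm' ⟨x₀, fun y => hsm.le_iff_le.mp (by rw [hx₀]; exact hi (e y))⟩
          rw [Lv_none hm', Lv_none hmI]
      have hR : Rv s₁ I' (fun x => a (e x)) = Rv s₁ I a := by
        by_cases hm' : ∃ x : I', ∀ y, y ≤ x
        · obtain ⟨x, hx⟩ := hm'
          have hmI : ∀ k, k ≤ e x := fun k => by
            obtain ⟨y, hy⟩ := hb.2 k
            rw [← hy]; exact hmono (hx y)
          rw [Rv_max (a := fun x => a (e x)) hx, Rv_max hmI]
        · have hmI : ¬∃ j : I, ∀ k, k ≤ j := by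
            rintro ⟨j, hj⟩
            obtain ⟨x₀, hx₀⟩ := hb.2 j
            exact hm' ⟨x₀, fun y => hsm.le_iff_le.mp (by rw [hx₀]; exact hj (e y))⟩
          rw [Rv_none hm', Rv_none hmI]
      rw [hL, hR]
  · have hne : ¬ Nonempty I := fun ⟨i⟩ => hne' ⟨(hb.2 i).choose⟩
    rw [iprod_empty hne', iprod_empty hne]

end
end Stmt9Aux



/-- A semigroup satisfying `a*b*c = a*c` becomes a complete semigroup, with the
product determined by the first and last factors (using `s₀`, `s₁` as defaults
when there is no minimum resp. maximum), extending the binary operation. -/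

theorem stmt9 {S : Type} [Semigroup S] (hid : ∀ a b c : S, a * b * c = a * c)
    (s₀ s₁ : S) :
    ∃ P : PartialInfSemigroup S,
      (∀ a b : S, P.prod (Fin 2) ![a, b] = some (a * b)) ∧
      ∀ (I : Type) [LinearOrder I] (a : I → S),
        (∀ i : I, (∀ j, j = i) → P.prod I a = some (a i)) ∧
        (∀ i j : I, i ≠ j → (∀ k, i ≤ k) → (∀ k, k ≤ j) →
          P.prod I a = some (a i * a j)) ∧
        (∀ i : I, (∀ k, i ≤ k) → (¬∃ j : I, ∀ k, k ≤ j) →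
          P.prod I a = some (a i * s₁)) ∧
        (∀ j : I, (∀ k, k ≤ j) → (¬∃ i : I, ∀ k, i ≤ k) →
          P.prod I a = some (s₀ * a j)) ∧
        (Nonempty I → (¬∃ i : I, ∀ k, i ≤ k) → (¬∃ j : I, ∀ k, k ≤ j) →
          P.prod I a = some (s₀ * s₁)) := by
  classical
  have h1 : ∀ a b c : S, a * (b * c) = a * c := fun a b c => by
    rw [← mul_assoc, hid]
  -- general product lemma: iprod of a non-singleton is Lv * Rv, five clauses below
  refine ⟨⟨fun I _ a => Stmt9Aux.iprod s₀ s₁ I a,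
      fun I _ a i hi => Stmt9Aux.iprod_singleton hi, ?_⟩, ?_, ?_⟩
  · -- associativity
    intro I J _ _ a π hsur hmono s hprod
    replace hprod : Stmt9Aux.iprod s₀ s₁ I a = some s := hprod
    have hne : Nonempty I := Stmt9Aux.iprod_nonempty hprod
    have hfib : ∀ j : J, Nonempty {i : I // π i = j} := fun j => by
      obtain ⟨i, hi⟩ := hsur j; exact ⟨⟨i, hi⟩⟩
    have hdef : ∀ j : J, ∃ v, Stmt9Aux.iprod s₀ s₁ {i : I // π i = j}
        (fun i => a i.1) = some v := fun j => Stmt9Aux.iprod_some (hfib j)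
    set p : J → S := fun j => (hdef j).choose with hp
    refine ⟨p, fun j => (hdef j).choose_spec, ?_⟩
    -- π of a min of I is a min of J
    have πmin : ∀ {m : I}, (∀ k, m ≤ k) → ∀ j' : J, π m ≤ j' := fun {m} h j' => by
      obtain ⟨i, hi⟩ := hsur j'; rw [← hi]; exact hmono (h i)
    have πmax : ∀ {m : I}, (∀ k, k ≤ m) → ∀ j' : J, j' ≤ π m := fun {m} h j' => by
      obtain ⟨i, hi⟩ := hsur j'; rw [← hi]; exact hmono (h i)
    by_cases hJs : ∃ j : J, ∀ k, k = j
    · -- J is a singleton; the single fiber is a monotone-bijective copy of I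
      obtain ⟨j, hj⟩ := hJs
      have hall : ∀ i : I, π i = j := fun i => hj (π i)
      have htrans : Stmt9Aux.iprod s₀ s₁ {i : I // π i = j} (fun i => a i.1)
          = some s := by
        rw [Stmt9Aux.iprod_transfer (fun x : {i : I // π i = j} => x.1)
          ⟨fun x y hxy => Subtype.ext hxy, fun i => ⟨⟨i, hall i⟩, rfl⟩⟩
          (fun x y hxy => hxy) a]
        exact hprod
      have hpj : p j = s :=
        Option.some.inj (((hdef j).choose_spec).symm.trans htrans)
      show Stmt9Aux.iprod s₀ s₁ J p = some s
      rw [Stmt9Aux.iprod_singleton (i := j) hj, hpj]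
    · -- J (hence I) is not a singleton
      have hIs : ¬∃ i : I, ∀ k, k = i := by
        rintro ⟨i, hi⟩
        refine hJs ⟨π i, fun k => ?_⟩
        obtain ⟨i', hi'⟩ := hsur k
        rw [← hi', hi i']
      have hs : s = Stmt9Aux.Lv s₀ I a * Stmt9Aux.Rv s₁ I a := by
        rw [Stmt9Aux.iprod_pair hne hIs] at hprod
        exact (Option.some.inj hprod).symm
      have hneJ : Nonempty J := ⟨π hne.some⟩
      show Stmt9Aux.iprod s₀ s₁ J p = some s
      rw [Stmt9Aux.iprod_pair hneJ hJs, hs]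
      -- step for the left factor
      have stepL : ∀ y : S, Stmt9Aux.Lv s₀ J p * y = Stmt9Aux.Lv s₀ I a * y := by
        intro y
        by_cases hmJ : ∃ j : J, ∀ k, j ≤ k
        · obtain ⟨j₀, hj₀⟩ := hmJ
          rw [Stmt9Aux.Lv_min hj₀]
          have hpj := (hdef j₀).choose_spec
          by_cases hmI : ∃ i : I, ∀ k, i ≤ k
          · obtain ⟨m, hm⟩ := hmI
            rw [Stmt9Aux.Lv_min hm]
            have hπm : π m = j₀ := le_antisymm
              (by
                have := πmin hm j₀
                exact this) (hj₀ (π m))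
            have hmfib : ∀ x : {i : I // π i = j₀}, (⟨m, hπm⟩ : {i : I // π i = j₀}) ≤ x :=
              fun x => hm x.1
            by_cases hfs : ∃ x : {i : I // π i = j₀}, ∀ y, y = x
            · obtain ⟨x, hx⟩ := hfs
              have hx' : ∀ y : {i : I // π i = j₀}, y = ⟨m, hπm⟩ :=
                fun y => (hx y).trans (hx ⟨m, hπm⟩).symm
              have : p j₀ = a m := by
                have h2 := Stmt9Aux.iprod_singleton (s₀ := s₀) (s₁ := s₁)
                  (a := fun i : {i : I // π i = j₀} => a i.1) hx'
                exact Option.some.inj (hpj.symm.trans h2)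
              rw [this]
            · have h2 := Stmt9Aux.iprod_pair (s₀ := s₀) (s₁ := s₁)
                (a := fun i : {i : I // π i = j₀} => a i.1) (hfib j₀) hfs
              rw [Stmt9Aux.Lv_min (a := fun i : {i : I // π i = j₀} => a i.1) hmfib] at h2
              have h3 : p j₀ = _ := Option.some.inj (hpj.symm.trans h2)
              rw [h3, hid]
          · rw [Stmt9Aux.Lv_none hmI]
            have fibmin : ¬∃ x : {i : I // π i = j₀}, ∀ y, x ≤ y := by
              rintro ⟨⟨m, hmj⟩, hx⟩
              refine hmI ⟨m, fun k => le_of_not_gt fun hk => ?_⟩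
              have hπk : π k = j₀ :=
                le_antisymm (hmj ▸ hmono hk.le) (hj₀ (π k))
              exact absurd (hx ⟨k, hπk⟩) (not_le.2 hk)
            have fibsing : ¬∃ x : {i : I // π i = j₀}, ∀ y, y = x := by
              rintro ⟨x, hx⟩
              exact fibmin ⟨x, fun y => (hx y).ge⟩
            have h2 := Stmt9Aux.iprod_pair (s₀ := s₀) (s₁ := s₁)
              (a := fun i : {i : I // π i = j₀} => a i.1) (hfib j₀) fibsing
            rw [Stmt9Aux.Lv_none fibmin] at h2
            have h3 : p j₀ = _ := Option.some.inj (hpj.symm.trans h2)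
            rw [h3, hid]
        · rw [Stmt9Aux.Lv_none hmJ]
          have hmI : ¬∃ i : I, ∀ k, i ≤ k := by
            rintro ⟨m, hm⟩
            exact hmJ ⟨π m, πmin hm⟩
          rw [Stmt9Aux.Lv_none hmI]
      -- step for the right factor
      have stepR : ∀ x : S, x * Stmt9Aux.Rv s₁ J p = x * Stmt9Aux.Rv s₁ I a := by
        intro x
        by_cases hmJ : ∃ j : J, ∀ k, k ≤ j
        · obtain ⟨j₀, hj₀⟩ := hmJ
          rw [Stmt9Aux.Rv_max hj₀]
          have hpj := (hdef j₀).choose_spec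
          by_cases hmI : ∃ i : I, ∀ k, k ≤ i
          · obtain ⟨m, hm⟩ := hmI
            rw [Stmt9Aux.Rv_max hm]
            have hπm : π m = j₀ := le_antisymm (hj₀ (π m)) (πmax hm j₀)
            have hmfib : ∀ y : {i : I // π i = j₀}, y ≤ (⟨m, hπm⟩ : {i : I // π i = j₀}) :=
              fun y => hm y.1
            by_cases hfs : ∃ x : {i : I // π i = j₀}, ∀ y, y = x
            · obtain ⟨z, hz⟩ := hfs
              have hz' : ∀ y : {i : I // π i = j₀}, y = ⟨m, hπm⟩ :=
                fun y => (hz y).trans (hz ⟨m, hπm⟩).symm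
              have : p j₀ = a m := by
                have h2 := Stmt9Aux.iprod_singleton (s₀ := s₀) (s₁ := s₁)
                  (a := fun i : {i : I // π i = j₀} => a i.1) hz'
                exact Option.some.inj (hpj.symm.trans h2)
              rw [this]
            · have h2 := Stmt9Aux.iprod_pair (s₀ := s₀) (s₁ := s₁)
                (a := fun i : {i : I // π i = j₀} => a i.1) (hfib j₀) hfs
              rw [Stmt9Aux.Rv_max (a := fun i : {i : I // π i = j₀} => a i.1) hmfib] at h2
              have h3 : p j₀ = _ := Option.some.inj (hpj.symm.trans h2)
              rw [h3, h1]
          · rw [Stmt9Aux.Rv_none hmI]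
            have fibmax : ¬∃ x : {i : I // π i = j₀}, ∀ y, y ≤ x := by
              rintro ⟨⟨m, hmj⟩, hx⟩
              refine hmI ⟨m, fun k => le_of_not_gt fun hk => ?_⟩
              have hπk : π k = j₀ :=
                le_antisymm (hj₀ (π k)) (hmj ▸ hmono hk.le)
              exact absurd (hx ⟨k, hπk⟩) (not_le.2 hk)
            have fibsing : ¬∃ x : {i : I // π i = j₀}, ∀ y, y = x := by
              rintro ⟨z, hz⟩
              exact fibmax ⟨z, fun y => (hz y).le⟩
            have h2 := Stmt9Aux.iprod_pair (s₀ := s₀) (s₁ := s₁)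
              (a := fun i : {i : I // π i = j₀} => a i.1) (hfib j₀) fibsing
            rw [Stmt9Aux.Rv_none fibmax] at h2
            have h3 : p j₀ = _ := Option.some.inj (hpj.symm.trans h2)
            rw [h3, h1]
        · rw [Stmt9Aux.Rv_none hmJ]
          have hmI : ¬∃ i : I, ∀ k, k ≤ i := by
            rintro ⟨m, hm⟩
            exact hmJ ⟨π m, πmax hm⟩
          rw [Stmt9Aux.Rv_none hmI]
      rw [stepL, stepR]
  · -- binary product
    intro a b
    have h01 : (0 : Fin 2) ≠ 1 := by decide
    have hmin : ∀ k : Fin 2, (0 : Fin 2) ≤ k := fun k => Fin.zero_le k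
    have hmax : ∀ k : Fin 2, k ≤ (1 : Fin 2) := fun k => by omega
    have hns : ¬∃ i : Fin 2, ∀ j, j = i := by
      rintro ⟨i, hi⟩
      exact h01 ((hi 0).trans (hi 1).symm)
    show Stmt9Aux.iprod s₀ s₁ (Fin 2) ![a, b] = some (a * b)
    rw [Stmt9Aux.iprod_pair ⟨0⟩ hns, Stmt9Aux.Lv_min hmin, Stmt9Aux.Rv_max hmax]
    simp
  · -- the five clauses
    intro I _ a
    refine ⟨fun i hi => Stmt9Aux.iprod_singleton hi, ?_, ?_, ?_, ?_⟩
    · intro i j hij hmin hmax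
      have hns : ¬∃ e : I, ∀ k, k = e := by
        rintro ⟨e, he⟩
        exact hij ((he i).trans (he j).symm)
      show Stmt9Aux.iprod s₀ s₁ I a = _
      rw [Stmt9Aux.iprod_pair ⟨i⟩ hns, Stmt9Aux.Lv_min hmin, Stmt9Aux.Rv_max hmax]
    · intro i hmin hnomax
      have hns : ¬∃ e : I, ∀ k, k = e := by
        rintro ⟨e, he⟩
        exact hnomax ⟨e, fun k => (he k).le⟩
      show Stmt9Aux.iprod s₀ s₁ I a = _
      rw [Stmt9Aux.iprod_pair ⟨i⟩ hns, Stmt9Aux.Lv_min hmin, Stmt9Aux.Rv_none hnomax]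
    · intro j hmax hnomin
      have hns : ¬∃ e : I, ∀ k, k = e := by
        rintro ⟨e, he⟩
        exact hnomin ⟨e, fun k => (he k).ge⟩
      show Stmt9Aux.iprod s₀ s₁ I a = _
      rw [Stmt9Aux.iprod_pair ⟨j⟩ hns, Stmt9Aux.Lv_none hnomin, Stmt9Aux.Rv_max hmax]
    · intro hne hnomin hnomax
      have hns : ¬∃ e : I, ∀ k, k = e := by
        rintro ⟨e, he⟩
        exact hnomin ⟨e, fun k => (he k).ge⟩
      show Stmt9Aux.iprod s₀ s₁ I a = _
      rw [Stmt9Aux.iprod_pair hne hns, Stmt9Aux.Lv_none hnomin, Stmt9Aux.Rv_none hnomax]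
end

section
/- Let (S, ∏) be a partial infinitary semigroup satisfying condition (∗): whenever π: I → J is surjective order-preserving and all products ∏_{π(i)=j} a_i (j ∈ J) and ∏_{j∈J} ∏_{π(i)=j} a_i are defined, then ∏_{i∈I} a_i is also defined. Let Ω ∉ S and S' = S ∪ {Ω}. Define ∏'_{i∈I} a_i = ∏_{i∈I} a_i if the latter is defined (in particular all a_i ∈ S), and ∏'_{i∈I} a_i = Ω otherwise. Then (S', ∏') is a complete semigroup (satisfies (U) and (N), with all products of nonempty sequences defined) extending (S, ∏). -/
/-- The value of the completed product: `some` of `P.prod` applied to the entries if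
they are all in `S`, and `none` (the absorbing `Ω`) otherwise (note: this is still
`none` if `P.prod` itself is undefined, which is exactly the absorbing value `Ω`). -/
noncomputable def pval {S : Type} (P : PartialInfSemigroup S) (I : Type) [LinearOrder I]
    (a : I → Option S) : Option S :=
  haveI := Classical.propDecidable
  if h : ∀ i, (a i).isSome then P.prod I (fun i => (a i).get (h i)) else none

theorem pval_pos {S : Type} (P : PartialInfSemigroup S) (I : Type) [LinearOrder I]
    (a : I → Option S) (h : ∀ i, (a i).isSome) :
    pval P I a = P.prod I (fun i => (a i).get (h i)) := by
  rw [pval, dif_pos h]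

theorem pval_some {S : Type} (P : PartialInfSemigroup S) (I : Type) [LinearOrder I]
    (b : I → S) : pval P I (fun i => some (b i)) = P.prod I b :=
  pval_pos P I _ (fun _ => Option.isSome_some)

theorem pval_none {S : Type} (P : PartialInfSemigroup S) (I : Type) [LinearOrder I]
    (a : I → Option S) (i : I) (hi : a i = none) : pval P I a = none := by
  rw [pval, dif_neg]
  intro h
  have := h i
  rw [hi] at this
  simp at this

/-- Adding a new fully absorbing element `Ω` (here `none`) to a partial infinitary
semigroup satisfying condition (∗) yields a complete semigroup extending it:
all undefined products are set to `Ω`. -/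
theorem stmt10 {S : Type} (P : PartialInfSemigroup S)
    (hstar : ∀ (I J : Type) [LinearOrder I] [LinearOrder J] (a : I → S) (π : I → J),
      Function.Surjective π → Monotone π → ∀ p : J → S,
      (∀ j : J, P.prod {i : I // π i = j} (fun i => a i.1) = some (p j)) →
      ∀ s : S, P.prod J p = some s → P.prod I a = some s) :
    ∃ P' : PartialInfSemigroup (Option S),
      (∀ (I : Type) [LinearOrder I] [Nonempty I] (a : I → Option S),
        ∃ s : Option S, P'.prod I a = some s) ∧
      (∀ (I : Type) [LinearOrder I] (b : I → S),
        P'.prod I (fun i => some (b i)) = some (P.prod I b)) ∧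
      (∀ (I : Type) [LinearOrder I] (a : I → Option S),
        (∃ i : I, a i = none) → P'.prod I a = some none) := by
  classical
  refine ⟨⟨fun I _ a => some (pval P I a), ?_, ?_⟩, ?_, ?_, ?_⟩
  · -- unit
    intro I _ a i hall
    show some (pval P I a) = some (a i)
    cases ha : a i with
    | none => rw [pval_none P I a i ha]
    | some s =>
      have h : ∀ j, (a j).isSome := by
        intro j; rw [hall j, ha]; rfl
      rw [pval_pos P I a h, P.unit I _ i hall, Option.some_get, ha]
  · -- assoc
    intro I J _ _ a π hsurj hmono s hs
    have hs2 : pval P I a = s := Option.some.inj hs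
    refine ⟨fun j => pval P {i : I // π i = j} (fun i => a i.1), fun j => rfl, ?_⟩
    show some (pval P J _) = some s
    rw [← hs2]
    refine congrArg some ?_
    -- goal : pval P J p = pval P I a
    by_cases h : ∀ i, (a i).isSome
    · set b : I → S := fun i => (a i).get (h i) with hb
      have hIa : pval P I a = P.prod I b := pval_pos P I a h
      have hfib : ∀ j : J, ∀ i : {i : I // π i = j},
          ((fun i : {i : I // π i = j} => a i.1) i).isSome := fun j i => h i.1
      have hfibval : ∀ j : J, pval P {i : I // π i = j} (fun i => a i.1)
          = P.prod {i : I // π i = j} (fun i => b i.1) := fun j => pval_pos P _ _ (hfib j)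
      cases hPb : P.prod I b with
      | some s0 =>
        obtain ⟨q, hq1, hq2⟩ := P.assoc I J b π hsurj hmono s0 hPb
        have hp : ∀ j, pval P {i : I // π i = j} (fun i => a i.1) = some (q j) := by
          intro j; rw [hfibval j, hq1 j]
        have hps : ∀ j, ((fun j => pval P {i : I // π i = j} (fun i => a i.1)) j).isSome := by
          intro j; simp only [hp j, Option.isSome_some]
        rw [pval_pos P J _ hps, hIa, hPb, ← hq2]
        refine congrArg (P.prod J) ?_
        funext j
        simp [hp j]
      | none =>
        rw [hIa, hPb]
        by_contra hne
        obtain ⟨s0, hs0⟩ : ∃ s0,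
            pval P J (fun j => pval P {i : I // π i = j} (fun i => a i.1)) = some s0 := by
          cases hx : pval P J (fun j => pval P {i : I // π i = j} (fun i => a i.1)) with
          | none => exact absurd hx hne
          | some s0 => exact ⟨s0, rfl⟩
        rw [pval] at hs0
        split at hs0
        · rename_i hall
          set q : J → S :=
            fun j => ((fun j => pval P {i : I // π i = j} (fun i => a i.1)) j).get (hall j)
            with hqdef
          have hq1 : ∀ j : J, P.prod {i : I // π i = j} (fun i => b i.1) = some (q j) := by
            intro j
            rw [← hfibval j]
            simp [hqdef]
          have := hstar I J b π hsurj hmono q hq1 s0 hs0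
          rw [hPb] at this
          exact Option.some_ne_none s0 this.symm
        · exact Option.some_ne_none s0 hs0.symm
    · push_neg at h
      obtain ⟨i, hi⟩ := h
      have hai : a i = none := by
        cases hx : a i with
        | none => rfl
        | some s => rw [hx] at hi; simp at hi
      rw [pval_none P I a i hai]
      refine pval_none P J _ (π i) ?_
      exact pval_none P _ _ ⟨i, rfl⟩ hai
  · intro I _ _ a
    exact ⟨_, rfl⟩
  · intro I _ b
    show some (pval P I _) = some (P.prod I b)
    rw [pval_some]
  · intro I _ a ⟨i, hi⟩
    show some (pval P I a) = some none
    rw [pval_none P I a i hi]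
end

section
/- Let S be a semigroup and P(S) its powerset. For a linearly ordered set I and a sequence (X_i)_{i∈I} of subsets of S, define ∏_{i∈I} X_i = { s₁ * s₂ * ... * s_n : n > 0, i₁ < i₂ < ... < i_n ∈ I, s_k ∈ X_{i_k} for each k }. Then P(S) with this total product on nonempty linearly-indexed sequences of subsets satisfies properties (U) and (N), i.e., it is a complete semigroup. Moreover, the full set S is a fully absorbing element: if S = X_i for some i ∈ I, then ∏_{i∈I} X_i = S. -/
/-- The ordered product `a_0 * a_1 * ... * a_n` of a finite sequence in a semigroup. -/
def seqProd {S : Type} [Semigroup S] : ∀ n : ℕ, (Fin (n + 1) → S) → S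
  | 0, a => a 0
  | n + 1, a => seqProd n (fun k => a k.castSucc) * a (Fin.last (n + 1))

namespace Stmt13
variable {S : Type} [Semigroup S]

def np (a : S) (l : List S) : S := l.foldl (· * ·) a

theorem np_cons (a b : S) (l : List S) : np a (b :: l) = np (a * b) l := rfl

theorem np_assoc (a b : S) (l : List S) : np (a * b) l = a * np b l :=
  List.foldl_assoc

theorem np_append (a : S) (l₁ l₂ : List S) : np a (l₁ ++ l₂) = np (np a l₁) l₂ :=
  List.foldl_append ..

theorem np_mul_np (a b : S) (l₁ l₂ : List S) :
    np a l₁ * np b l₂ = np a (l₁ ++ b :: l₂) := by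
  rw [np_append, np_cons, np_assoc]

def nprod : List S → Option S
  | [] => none
  | a :: l => some (np a l)

theorem nprod_append {A B : List S} {u v : S} (hA : nprod A = some u)
    (hB : nprod B = some v) : nprod (A ++ B) = some (u * v) := by
  cases A with
  | nil => simp [nprod] at hA
  | cons a t =>
    cases B with
    | nil => simp [nprod] at hB
    | cons b r =>
      simp only [nprod, Option.some_inj] at hA hB ⊢
      rw [← hA, ← hB]
      simp only [List.cons_append]
      rw [np_mul_np]

theorem nprod_cons {B : List S} {v : S} (u : S) (hB : nprod B = some v) :
    nprod (u :: B) = some (u * v) := by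
  cases B with
  | nil => simp [nprod] at hB
  | cons b r =>
    simp only [nprod, Option.some_inj] at hB ⊢
    rw [← hB, np_cons, np_assoc]

theorem seqProd_eq_np (n : ℕ) (f : Fin (n + 1) → S) :
    seqProd n f = np (f 0) (List.ofFn fun k : Fin n => f k.succ) := by
  induction n with
  | zero => simp [seqProd, np]
  | succ m ih =>
    show seqProd m (fun k => f k.castSucc) * f (Fin.last (m + 1)) = _
    rw [ih]
    have h1 : (List.ofFn fun k : Fin (m + 1) => f k.succ)
        = (List.ofFn fun k : Fin m => (fun j : Fin (m+1) => f j.castSucc) k.succ)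
          ++ [f (Fin.last (m + 1))] := by
      rw [List.ofFn_succ' (f := fun k : Fin (m+1) => f k.succ)]
      simp [List.concat_eq_append]
    rw [h1, ← np_mul_np]
    simp [np]

theorem nprod_ofFn (n : ℕ) (f : Fin (n + 1) → S) :
    nprod (List.ofFn f) = some (seqProd n f) := by
  rw [List.ofFn_succ, seqProd_eq_np]; rfl

def Good {I : Type} [LinearOrder I] (X : I → Set S) (y : S) : Prop :=
  ∃ L : List (I × S), L.Pairwise (fun p q => p.1 < q.1) ∧
    (∀ p ∈ L, p.2 ∈ X p.1) ∧ nprod (L.map Prod.snd) = some y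

def PSet (I : Type) [LinearOrder I] (X : I → Set S) : Set S :=
  {y : S | ∃ (n : ℕ) (g : Fin (n + 1) → I) (f : Fin (n + 1) → S),
    StrictMono g ∧ (∀ k, f k ∈ X (g k)) ∧ y = seqProd n f}

theorem mem_PSet {I : Type} [LinearOrder I] (X : I → Set S) (y : S) :
    y ∈ PSet I X ↔ Good X y := by
  constructor
  · rintro ⟨n, g, f, hg, hf, rfl⟩
    refine ⟨List.ofFn (fun k => (g k, f k)), ?_, ?_, ?_⟩
    · rw [List.pairwise_ofFn]; exact fun i j h => hg h
    · intro p hp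
      rw [List.mem_ofFn] at hp
      obtain ⟨k, rfl⟩ := hp
      exact hf k
    · rw [List.map_ofFn]
      exact nprod_ofFn n f
  · rintro ⟨L, hP, hX, hn⟩
    cases L with
    | nil => simp [nprod] at hn
    | cons a t =>
      refine ⟨t.length, fun k => ((a :: t).get k).1, fun k => ((a :: t).get k).2,
        ?_, ?_, ?_⟩
      · intro i j hij
        exact List.pairwise_iff_get.mp hP i j hij
      · intro k
        exact hX _ (List.get_mem _ _)
      · have : (a :: t).map Prod.snd
            = List.ofFn (fun k : Fin (t.length + 1) => ((a :: t).get k).2) := by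
          conv_lhs => rw [← List.ofFn_get (a :: t)]
          rw [List.map_ofFn]; rfl
        rw [this, nprod_ofFn] at hn
        exact (Option.some_inj.mp hn).symm

section Assoc
variable {I J : Type} [LinearOrder I] [LinearOrder J] (X : I → Set S) (π : I → J)

/-- A block of elements all in the fiber above `j` multiplies into `PSet` of the fiber. -/
theorem block_mem (j : J) (B : List (I × S)) (hB : B.Pairwise (fun p q => p.1 < q.1))
    (hX : ∀ p ∈ B, p.2 ∈ X p.1) (hfib : ∀ p ∈ B, π p.1 = j) {y : S}
    (hn : nprod (B.map Prod.snd) = some y) :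
    y ∈ PSet {i : I // π i = j} (fun i => X i.1) := by
  rw [mem_PSet]
  refine ⟨B.pmap (fun p hp => ((⟨p.1, hp⟩ : {i : I // π i = j}), p.2))
    (fun p hp => hfib p hp), ?_, ?_, ?_⟩
  · rw [List.pairwise_pmap]
    exact hB.imp_of_mem (fun _ _ h => fun _ _ => h)
  · intro q hq
    rw [List.mem_pmap] at hq
    obtain ⟨p, hp, rfl⟩ := hq
    exact hX p hp
  · rw [List.map_pmap, List.pmap_eq_map]
    exact hn

/-- Direction A: a product over `I` is a product of fiber-products over `J`. -/
theorem toFibers (hmono : Monotone π) : ∀ (N : ℕ) (L : List (I × S)) (y : S),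
    L.length ≤ N → L.Pairwise (fun p q => p.1 < q.1) → (∀ p ∈ L, p.2 ∈ X p.1) →
    nprod (L.map Prod.snd) = some y →
    ∃ M : List (J × S), M.Pairwise (fun p q => p.1 < q.1) ∧
      (∀ q ∈ M, q.2 ∈ PSet {i : I // π i = q.1} (fun i => X i.1)) ∧
      nprod (M.map Prod.snd) = some y ∧
      (∀ q ∈ M, ∃ p ∈ L, q.1 = π p.1) := by
  intro N
  induction N with
  | zero =>
    rintro (_ | ⟨a, t⟩) y hlen hP hX hn
    · simp [nprod] at hn
    · simp at hlen
  | succ N ih =>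
    rintro (_ | ⟨a, t⟩) y hlen hP hX hn
    · simp [nprod] at hn
    obtain ⟨j, hj⟩ : ∃ j, j = π a.1 := ⟨_, rfl⟩
    obtain ⟨t1, ht1⟩ : ∃ t1, t1 = t.takeWhile (fun q => decide (π q.1 = j)) := ⟨_, rfl⟩
    obtain ⟨t2, ht2⟩ : ∃ t2, t2 = t.dropWhile (fun q => decide (π q.1 = j)) := ⟨_, rfl⟩
    have ht : t1 ++ t2 = t := by
      rw [ht1, ht2]; exact List.takeWhile_append_dropWhile ..
    have hL : a :: t = (a :: t1) ++ t2 := by rw [List.cons_append, ht]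
    have ht1sub : t1.Sublist t := ht1 ▸ List.takeWhile_sublist _
    have ht2sub : t2.Sublist t := ht2 ▸ List.dropWhile_sublist _
    have hB0sub : (a :: t1).Sublist (a :: t) := ht1sub.cons₂ a
    have hPt : t.Pairwise (fun p q => p.1 < q.1) := hP.of_cons
    have hlt : ∀ p ∈ t, a.1 < p.1 := fun p hp => (List.pairwise_cons.mp hP).1 p hp
    have hfib : ∀ p ∈ (a :: t1), π p.1 = j := by
      intro p hp
      rcases List.mem_cons.mp hp with rfl | hp
      · exact hj.symm
      · have hp' : p ∈ t.takeWhile (fun q => decide (π q.1 = j)) := ht1 ▸ hp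
        have := List.mem_takeWhile_imp hp'
        exact of_decide_eq_true this
    -- the first block
    set y0 := np a.2 (t1.map Prod.snd) with hy0
    have hn0 : nprod ((a :: t1).map Prod.snd) = some y0 := rfl
    have hmem0 : y0 ∈ PSet {i : I // π i = j} (fun i => X i.1) :=
      block_mem X π j (a :: t1) (hP.sublist hB0sub)
        (fun p hp => hX p (hB0sub.subset hp)) hfib hn0
    cases h2 : t2 with
    | nil =>
      rw [h2] at ht
      have hy : y = y0 := by
        have : (a :: t).map Prod.snd = (a :: t1).map Prod.snd := by
          rw [← ht]; simp
        rw [this, hn0] at hn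
        exact (Option.some_inj.mp hn).symm
      refine ⟨[(j, y0)], List.pairwise_singleton _ _, ?_, by simp [nprod, np, hy], ?_⟩
      · intro q hq; rcases List.mem_singleton.mp hq with rfl; exact hmem0
      · intro q hq; rcases List.mem_singleton.mp hq with rfl
        exact ⟨a, (List.mem_cons_self (a := a) (l := t)), hj⟩
    | cons b r =>
      -- π of head of t2 is > j, hence everything later maps above j
      have hbmem : b ∈ t := ht2sub.subset (h2 ▸ (List.mem_cons_self (a := b) (l := r)))
      have hbj : j < π b.1 := by
        have h1 : j ≤ π b.1 := by rw [hj]; exact hmono (hlt b hbmem).le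
        have h2' : ¬ π b.1 = j := by
          have hd : t.dropWhile (fun q => decide (π q.1 = j)) = b :: r :=
            ht2 ▸ h2
          have := List.head_dropWhile_not (fun q : I × S => decide (π q.1 = j)) (l := t)
            (by rw [hd]; simp)
          simp only [hd, List.head_cons] at this
          simpa using this
        exact lt_of_le_of_ne h1 (fun h => h2' h.symm)
      have hgt : ∀ p ∈ t2, j < π p.1 := by
        rintro p hp
        rw [h2] at hp
        rcases List.mem_cons.mp hp with rfl | hp
        · exact hbj
        · have : b.1 < p.1 := by
            have := (hPt.sublist ht2sub)
            rw [h2] at this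
            exact (List.pairwise_cons.mp this).1 p hp
          exact lt_of_lt_of_le hbj (hmono this.le)
      -- split the product
      have hn2 : nprod (t2.map Prod.snd) = some (np b.2 (r.map Prod.snd)) := by
        rw [h2]; rfl
      set y2 := np b.2 (r.map Prod.snd) with hy2
      have hy : y = y0 * y2 := by
        have : (a :: t).map Prod.snd = (a :: t1).map Prod.snd ++ t2.map Prod.snd := by
          rw [hL, List.map_append]
        rw [this, nprod_append hn0 hn2] at hn
        exact (Option.some_inj.mp hn).symm
      obtain ⟨M2, hM2P, hM2X, hM2n, hM2mem⟩ := ih t2 y2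
        (le_trans ht2sub.length_le (Nat.le_of_succ_le_succ (by simpa using hlen)))
        (hPt.sublist ht2sub) (fun p hp => hX p (List.mem_cons_of_mem a (ht2sub.subset hp)))
        hn2
      have hjM2 : ∀ q ∈ M2, j < q.1 := by
        intro q hq
        obtain ⟨p, hp, hqp⟩ := hM2mem q hq
        rw [hqp]; exact hgt p hp
      refine ⟨(j, y0) :: M2, List.pairwise_cons.mpr ⟨hjM2, hM2P⟩, ?_, ?_, ?_⟩
      · intro q hq; rcases List.mem_cons.mp hq with rfl | hq
        · exact hmem0
        · exact hM2X q hq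
      · rw [List.map_cons, nprod_cons y0 hM2n, hy]
      · intro q hq; rcases List.mem_cons.mp hq with rfl | hq
        · exact ⟨a, (List.mem_cons_self (a := a) (l := t)), hj⟩
        · obtain ⟨p, hp, hpq⟩ := hM2mem q hq
          exact ⟨p, List.mem_cons_of_mem a (ht2sub.subset hp), hpq⟩

/-- Direction B: a product of fiber-products over `J` is a product over `I`. -/
theorem ofFibers (hmono : Monotone π) : ∀ (M : List (J × S)) (y : S),
    M.Pairwise (fun p q => p.1 < q.1) →
    (∀ q ∈ M, q.2 ∈ PSet {i : I // π i = q.1} (fun i => X i.1)) →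
    nprod (M.map Prod.snd) = some y →
    ∃ L : List (I × S), L.Pairwise (fun p q => p.1 < q.1) ∧
      (∀ p ∈ L, p.2 ∈ X p.1) ∧ nprod (L.map Prod.snd) = some y ∧
      (∀ p ∈ L, π p.1 ∈ M.map Prod.fst) := by
  intro M
  induction M with
  | nil => intro y _ _ hn; simp [nprod] at hn
  | cons q0 M' ih =>
    intro y hP hX hn
    -- expand the head block
    have h0 : q0.2 ∈ PSet {i : I // π i = q0.1} (fun i => X i.1) :=
      hX q0 List.mem_cons_self
    rw [mem_PSet] at h0
    obtain ⟨L0s, hL0P, hL0X, hL0n⟩ := h0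
    obtain ⟨L0, hL0⟩ : ∃ L0 : List (I × S),
        L0 = L0s.map (fun r => (r.1.1, r.2)) := ⟨_, rfl⟩
    have hL0pair : L0.Pairwise (fun p q => p.1 < q.1) := by
      rw [hL0]
      exact hL0P.map _ (fun a b h => h)
    have hL0mem : ∀ p ∈ L0, p.2 ∈ X p.1 ∧ π p.1 = q0.1 := by
      intro p hp
      rw [hL0, List.mem_map] at hp
      obtain ⟨r, hr, rfl⟩ := hp
      exact ⟨hL0X r hr, r.1.2⟩
    have hL0n' : nprod (L0.map Prod.snd) = some q0.2 := by
      rw [hL0, List.map_map]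
      exact hL0n
    cases M' with
    | nil =>
      have hy : y = q0.2 := by
        simp only [List.map_cons, List.map_nil, nprod, np, List.foldl_nil,
          Option.some_inj] at hn
        exact hn.symm
      refine ⟨L0, hL0pair, fun p hp => (hL0mem p hp).1, by rw [hL0n', hy], ?_⟩
      intro p hp
      simp [(hL0mem p hp).2]
    | cons q1 M'' =>
      have hn' : nprod ((q1 :: M'').map Prod.snd) = some (np q1.2 (M''.map Prod.snd)) := rfl
      have hy : y = q0.2 * np q1.2 (M''.map Prod.snd) := by
        have := nprod_cons q0.2 hn'
        rw [← List.map_cons] at this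
        rw [this] at hn
        exact (Option.some_inj.mp hn).symm
      obtain ⟨L', hL'P, hL'X, hL'n, hL'mem⟩ := ih (np q1.2 (M''.map Prod.snd))
        hP.of_cons (fun q hq => hX q (List.mem_cons_of_mem _ hq)) hn'
      have hcross : ∀ p ∈ L0, ∀ r ∈ L', p.1 < r.1 := by
        intro p hp r hr
        have h1 : π p.1 = q0.1 := (hL0mem p hp).2
        have h2 : q0.1 < π r.1 := by
          have := hL'mem r hr
          rw [List.mem_map] at this
          obtain ⟨q, hq, hqr⟩ := this
          rw [← hqr]
          exact (List.pairwise_cons.mp hP).1 q hq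
        by_contra hle
        push_neg at hle
        exact absurd (hmono hle) (not_le.mpr (h1 ▸ h2))
      refine ⟨L0 ++ L', ?_, ?_, ?_, ?_⟩
      · rw [List.pairwise_append]
        exact ⟨hL0pair, hL'P, hcross⟩
      · intro p hp
        rcases List.mem_append.mp hp with hp | hp
        · exact (hL0mem p hp).1
        · exact hL'X p hp
      · rw [List.map_append, nprod_append hL0n' hL'n, hy]
      · intro p hp
        rcases List.mem_append.mp hp with hp | hp
        · simp [(hL0mem p hp).2]
        · have := hL'mem p hp
          simp only [List.map_cons]
          exact List.mem_cons_of_mem _ this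

theorem PSet_fiber_eq (hsurj : Function.Surjective π) (hmono : Monotone π) :
    PSet J (fun j => PSet {i : I // π i = j} (fun i => X i.1)) = PSet I X := by
  ext y
  rw [mem_PSet, mem_PSet]
  constructor
  · rintro ⟨M, hMP, hMX, hMn⟩
    obtain ⟨L, hLP, hLX, hLn, -⟩ := ofFibers X π hmono M y hMP hMX hMn
    exact ⟨L, hLP, hLX, hLn⟩
  · rintro ⟨L, hLP, hLX, hLn⟩
    obtain ⟨M, hMP, hMX, hMn, -⟩ := toFibers X π hmono L.length L y le_rfl hLP hLX hLn
    exact ⟨M, hMP, hMX, hMn⟩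

end Assoc

theorem singleton_strictMono {I : Type} [LinearOrder I] (g : Fin 1 → I) :
    StrictMono g := fun k l h =>
  absurd h (by simp [Subsingleton.elim k l])

theorem PSet_unit {I : Type} [LinearOrder I] (a : I → Set S) (i : I)
    (h : ∀ j, j = i) : PSet I a = a i := by
  ext y
  constructor
  · rintro ⟨n, g, f, hg, hf, rfl⟩
    cases n with
    | zero =>
      show f 0 ∈ a i
      have hgi : g 0 = i := h _
      have := hf 0
      rwa [hgi] at this
    | succ m =>
      exfalso
      have h01 : (0 : Fin (m + 2)) < 1 := by simp [Fin.lt_def]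
      have := hg h01
      rw [h (g 0), h (g 1)] at this
      exact lt_irrefl i this
  · intro hy
    exact ⟨0, fun _ => i, fun _ => y, singleton_strictMono _, fun _ => hy, rfl⟩

theorem PSet_univ {I : Type} [LinearOrder I] (X : I → Set S) (i : I)
    (h : X i = Set.univ) : PSet I X = (Set.univ : Set S) := by
  apply Set.eq_univ_of_forall
  intro y
  exact ⟨0, fun _ => i, fun _ => y, singleton_strictMono _,
    fun _ => by rw [h]; trivial, rfl⟩

end Stmt13

open Stmt13 in
/-- The powerset of a semigroup is a complete semigroup: the product of a
linearly-indexed family of subsets is the set of all ordered products of finitely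
many elements picked at increasing indices; the full set is fully absorbing. -/
theorem stmt13 {S : Type} [Semigroup S] :
    ∃ P : PartialInfSemigroup (Set S),
      (∀ (I : Type) [LinearOrder I] [Nonempty I] (X : I → Set S),
        P.prod I X = some {y : S | ∃ (n : ℕ) (g : Fin (n + 1) → I)
          (f : Fin (n + 1) → S),
          StrictMono g ∧ (∀ k, f k ∈ X (g k)) ∧ y = seqProd n f}) ∧
      (∀ (I : Type) [LinearOrder I] [Nonempty I] (X : I → Set S) (i : I),
        X i = Set.univ → P.prod I X = some Set.univ) := by
  classical
  refine ⟨⟨fun I _ X => if Nonempty I then some (PSet I X) else none,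
    ?_, ?_⟩, ?_, ?_⟩
  · -- unit
    intro I _ a i h
    rw [if_pos ⟨i⟩, PSet_unit a i h]
  · -- assoc
    intro I J _ _ a π hsurj hmono s hs
    have hI : Nonempty I := by
      by_contra h
      rw [if_neg h] at hs
      exact absurd hs (by simp)
    rw [if_pos hI] at hs
    have hsI : s = PSet I a := (Option.some_inj.mp hs).symm
    have hJ : Nonempty J := hI.map π
    refine ⟨fun j => PSet {i : I // π i = j} (fun i => a i.1), ?_, ?_⟩
    · intro j
      dsimp only
      have : Nonempty {i : I // π i = j} := by
        obtain ⟨i, hi⟩ := hsurj j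
        exact ⟨⟨i, hi⟩⟩
      rw [if_pos this]
    · rw [if_pos hJ, PSet_fiber_eq a π hsurj hmono, hsI]
  · -- the product is the stated set
    intro I _ _ X
    dsimp only
    rw [if_pos ‹Nonempty I›]
    rfl
  · -- full set absorbing
    intro I _ _ X i h
    dsimp only
    rw [if_pos ‹Nonempty I›, PSet_univ X i h]
end

section
/- Let X be a chain-complete poset and F the set of inflationary functions on X (f(x) ≥ x for all x), with the ordinal-indexed product ∏_{i<δ} f_i defined by transfinite recursion (empty product = identity; successor step composes with f_ε; limit step takes pointwise supremum of the chain of partial products). Then this product satisfies the ordinal form of generalized associativity: if π: δ → η is a surjective order-preserving map between ordinals and, for j < η, the fiber π^{-1}(j) = [β_j, β_j + ε_j), then ∏_{α<δ} f_α = ∏_{j<η} ∏_{γ<ε_j} f_{β_j+γ}. -/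
open Ordinal Order

private lemma ubEq {X : Type} [PartialOrder X] {S T : Set X}
    (hTS : T ⊆ S) (hdom : ∀ s ∈ S, ∃ t ∈ T, s ≤ t) :
    upperBounds S = upperBounds T := by
  ext u
  constructor
  · intro hu t ht; exact hu (hTS ht)
  · intro hu s hs
    obtain ⟨t, htT, hst⟩ := hdom s hs
    exact hst.trans (hu htT)

private lemma lubEq {X : Type} [PartialOrder X] {S T : Set X} {u v : X}
    (h : upperBounds S = upperBounds T) (hu : IsLUB S u) (hv : IsLUB T v) : u = v := by
  have hu' : IsLUB T u := by
    constructor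
    · rw [← h]; exact hu.1
    · intro b hb; exact hu.2 (by rw [h]; exact hb)
  exact hu'.unique hv

section P

set_option linter.unusedSectionVars false
set_option linter.unusedVariables false

variable {X : Type} [PartialOrder X]
  (P : Ordinal → (Ordinal → X → X) → X → X)
  (hP0 : ∀ g : Ordinal → X → X, (∀ i x, x ≤ g i x) → P 0 g = id)
  (hPsucc : ∀ g : Ordinal → X → X, (∀ i x, x ≤ g i x) →
    ∀ ε : Ordinal, P (ε + 1) g = fun x => g ε (P ε g x))
  (hPlim : ∀ g : Ordinal → X → X, (∀ i x, x ≤ g i x) →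
    ∀ δ : Ordinal, Order.IsSuccLimit δ → ∀ x : X,
      IsLUB {y : X | ∃ ε < δ, y = P ε g x} (P δ g x))

include hP0 hPsucc hPlim in
private lemma Pmono (g : Ordinal → X → X) (hg : ∀ i x, x ≤ g i x) :
    ∀ ε' ε, ε ≤ ε' → ∀ x, P ε g x ≤ P ε' g x := by
  intro ε'
  induction ε' using Ordinal.limitRecOn with
  | zero =>
    intro ε hε x
    rw [nonpos_iff_eq_zero.mp hε]
  | add_one ε' ih =>
    intro ε hε x
    rcases lt_or_eq_of_le hε with h | h
    · rw [Order.lt_add_one_iff] at h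
      calc P ε g x ≤ P ε' g x := ih ε h x
        _ ≤ g ε' (P ε' g x) := hg _ _
        _ = P (succ ε') g x := by rw [← add_one_eq_succ, hPsucc g hg]
    · rw [h]
  | limit δ hδ ih =>
    intro ε hε x
    rcases lt_or_eq_of_le hε with h | h
    · exact (hPlim g hg δ hδ x).1 ⟨ε, h, rfl⟩
    · rw [h]

include hP0 hPsucc hPlim in
private lemma Pinfl (g : Ordinal → X → X) (hg : ∀ i x, x ≤ g i x) :
    ∀ ε x, x ≤ P ε g x := by
  intro ε x
  have h0 : P 0 g x = x := by rw [hP0 g hg]; rfl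
  calc x = P 0 g x := h0.symm
    _ ≤ P ε g x := Pmono P hP0 hPsucc hPlim g hg ε 0 (zero_le : (0:Ordinal) ≤ ε) x

include hP0 hPsucc hPlim in
private lemma Psplit (g : Ordinal → X → X) (hg : ∀ i x, x ≤ g i x) (β : Ordinal) :
    ∀ ε x, P (β + ε) g x = P ε (fun γ => g (β + γ)) (P β g x) := by
  have hg' : ∀ i x, x ≤ g (β + i) x := fun i x => hg _ _
  intro ε
  induction ε using Ordinal.limitRecOn with
  | zero =>
    intro x
    rw [add_zero, hP0 _ hg']; rfl
  | add_one ε ih =>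
    intro x
    have : β + (ε + 1) = (β + ε) + 1 := by rw [add_assoc]
    rw [this, hPsucc g hg, hPsucc _ hg']
    exact congrArg _ (ih x)
  | limit δ hδ ih =>
    intro x
    have hlim : Order.IsSuccLimit (β + δ) := isSuccLimit_add β hδ
    have h1 := hPlim g hg (β + δ) hlim x
    have h2 := hPlim _ hg' δ hδ (P β g x)
    have hT : {y : X | ∃ γ < δ, y = P γ (fun γ => g (β + γ)) (P β g x)}
        = {y : X | ∃ γ < δ, y = P (β + γ) g x} := by
      ext y; constructor
      · rintro ⟨γ, hγ, rfl⟩; exact ⟨γ, hγ, (ih γ hγ x).symm⟩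
      · rintro ⟨γ, hγ, rfl⟩; exact ⟨γ, hγ, ih γ hγ x⟩
    rw [hT] at h2
    refine lubEq ?_ h1 h2
    apply ubEq
    · rintro y ⟨γ, hγ, rfl⟩
      exact ⟨β + γ, (add_lt_add_iff_left β).mpr hγ, rfl⟩
    · rintro y ⟨ζ, hζ, rfl⟩
      rcases le_or_gt β ζ with h | h
      · refine ⟨P (β + (ζ - β)) g x, ⟨ζ - β, ?_, rfl⟩, ?_⟩
        · rwa [← add_lt_add_iff_left β, Ordinal.add_sub_cancel_of_le h]
        · rw [Ordinal.add_sub_cancel_of_le h]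
      · refine ⟨P (β + 0) g x, ⟨0, hδ.pos, rfl⟩, ?_⟩
        rw [add_zero]
        exact Pmono P hP0 hPsucc hPlim g hg β ζ h.le x

end P

/-- The transfinite product of inflationary functions on a chain-complete poset
(given by any operator `P` satisfying the defining recursion on inflationary
sequences) satisfies the ordinal form (Ord) of generalized associativity. -/
theorem stmt15 {X : Type} [PartialOrder X]
    (hcc : ∀ c : Set X, c.Nonempty → IsChain (· ≤ ·) c → ∃ u : X, IsLUB c u)
    (P : Ordinal → (Ordinal → X → X) → X → X)
    (hP0 : ∀ g : Ordinal → X → X, (∀ i x, x ≤ g i x) → P 0 g = id)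
    (hPsucc : ∀ g : Ordinal → X → X, (∀ i x, x ≤ g i x) →
      ∀ ε : Ordinal, P (ε + 1) g = fun x => g ε (P ε g x))
    (hPlim : ∀ g : Ordinal → X → X, (∀ i x, x ≤ g i x) →
      ∀ δ : Ordinal, Order.IsSuccLimit δ → ∀ x : X,
        IsLUB {y : X | ∃ ε < δ, y = P ε g x} (P δ g x))
    (f : Ordinal → X → X) (hf : ∀ i x, x ≤ f i x)
    (δ η : Ordinal) (π βo εo : Ordinal → Ordinal)
    (hπlt : ∀ α, α < δ → π α < η)
    (hπmono : ∀ α α', α ≤ α' → α' < δ → π α ≤ π α')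
    (hπsurj : ∀ j, j < η → ∃ α, α < δ ∧ π α = j)
    (hfib : ∀ j, j < η → ∀ α, (α < δ ∧ π α = j) ↔ (βo j ≤ α ∧ α < βo j + εo j)) :
    P δ f = P η (fun j => P (εo j) (fun γ => f (βo j + γ))) := by
  -- the inner product sequence is inflationary
  have hg : ∀ j x, x ≤ P (εo j) (fun γ => f (βo j + γ)) x := fun j x =>
    Pinfl P hP0 hPsucc hPlim _ (fun i x => hf _ _) _ x
  induction η using Ordinal.induction generalizing δ π with
  | h η IH =>
  rcases Ordinal.zero_or_succ_or_isSuccLimit η with rfl | ⟨η', rfl⟩ | hηlim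
  · -- η = 0 : δ = 0
    have hδ0 : δ = 0 := by
      by_contra h
      exact absurd (hπlt 0 (pos_iff_ne_zero.mpr h)) not_lt_zero
    rw [hδ0, hP0 f hf, hP0 _ hg]
  · -- successor case
    obtain ⟨α₀, hα₀δ, hπα₀⟩ := hπsurj η' (lt_succ η')
    have hfibη' := hfib η' (lt_succ η')
    have hβα₀ : βo η' ≤ α₀ ∧ α₀ < βo η' + εo η' := (hfibη' α₀).mp ⟨hα₀δ, hπα₀⟩
    -- δ = βo η' + εo η'
    have hδeq : δ = βo η' + εo η' := by
      apply le_antisymm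
      · by_contra h
        push_neg at h
        -- h : βo η' + εo η' < δ
        have hπle : π (βo η' + εo η') ≤ η' := lt_succ_iff.mp (hπlt _ h)
        rcases lt_or_eq_of_le hπle with h' | h'
        · have hm : π α₀ ≤ π (βo η' + εo η') := hπmono _ _ hβα₀.2.le h
          rw [hπα₀] at hm
          exact absurd (hm.trans_lt h') (lt_irrefl _)
        · have := (hfibη' _).mp ⟨h, h'⟩
          exact absurd this.2 (lt_irrefl _)
      · by_contra h
        push_neg at h
        have hβδ : βo η' ≤ δ := hβα₀.1.trans hα₀δ.le
        exact absurd ((hfibη' δ).mpr ⟨hβδ, h⟩).1 (lt_irrefl δ)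
    -- sub-claim: restriction to βo η'
    have hβ_le : βo η' ≤ δ := hδeq ▸ le_self_add
    have key : ∀ α, βo η' ≤ α → α < δ → π α = η' := by
      intro α h1 h2
      exact ((hfibη' α).mpr ⟨h1, hδeq ▸ h2⟩).2
    have hsub : P (βo η') f = P η' (fun j => P (εo j) (fun γ => f (βo j + γ))) := by
      apply IH η' (lt_succ η')
      · intro α hα
        have hαδ : α < δ := hα.trans_le hβ_le
        have : π α ≤ η' := lt_succ_iff.mp (hπlt α hαδ)
        rcases lt_or_eq_of_le this with h' | h'
        · exact h'
        · exact absurd (((hfibη' α).mp ⟨hαδ, h'⟩).1) (not_le.mpr hα)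
      · intro α α' h1 h2; exact hπmono α α' h1 (h2.trans_le hβ_le)
      · intro j hj
        obtain ⟨α, hαδ, hπα⟩ := hπsurj j (hj.trans (lt_succ η'))
        refine ⟨α, ?_, hπα⟩
        by_contra h
        push_neg at h
        have hk := key α h hαδ
        rw [hπα] at hk
        exact absurd hk (ne_of_lt hj)
      · intro j hj α
        constructor
        · rintro ⟨h1, h2⟩
          exact (hfib j (hj.trans (lt_succ η')) α).mp ⟨h1.trans_le hβ_le, h2⟩
        · intro h
          have := (hfib j (hj.trans (lt_succ η')) α).mpr h
          refine ⟨?_, this.2⟩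
          by_contra hc
          push_neg at hc
          have hk := key α hc this.1
          rw [this.2] at hk
          exact absurd hk (ne_of_lt hj)
    funext x
    rw [hδeq, Psplit P hP0 hPsucc hPlim f hf _ _ x, ← add_one_eq_succ, hPsucc _ hg, hsub]
  · -- limit case
    -- δ is a limit ordinal
    obtain ⟨α₁, hα₁δ, _⟩ := hπsurj 0 hηlim.pos
    have hδlim : Order.IsSuccLimit δ := by
      refine Ordinal.isSuccLimit_iff.mpr ⟨fun h => absurd (h ▸ hα₁δ) not_lt_zero, isSuccPrelimit_of_succ_lt fun ζ hζ => ?_⟩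
      have h1 : π ζ + 1 < η := (add_one_eq_succ (π ζ)) ▸ hηlim.succ_lt (hπlt ζ hζ)
      obtain ⟨α, hαδ, hπα⟩ := hπsurj _ h1
      have hlt : π ζ < π ζ + 1 := by
        rw [add_one_eq_succ]; exact lt_succ _
      have hζα : ζ < α := by
        by_contra h
        push_neg at h
        have := hπmono α ζ h hζ
        rw [hπα] at this
        exact absurd this hlt.not_ge
      exact (succ_le_of_lt hζα).trans_lt hαδ
    -- key facts about βo j for j < η
    have hβfib : ∀ j, j < η → βo j < δ ∧ π (βo j) = j := by
      intro j hj
      obtain ⟨α, hαδ, hπα⟩ := hπsurj j hj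
      have hα : βo j ≤ α ∧ α < βo j + εo j := (hfib j hj α).mp ⟨hαδ, hπα⟩
      exact (hfib j hj (βo j)).mpr ⟨le_rfl, hα.1.trans_lt hα.2⟩
    -- IH at each j < η
    have hsub : ∀ j, j < η → P (βo j) f = P j (fun j => P (εo j) (fun γ => f (βo j + γ))) := by
      intro j hj
      have hkey : ∀ α, α < δ → βo j ≤ α → j ≤ π α := by
        intro α h1 h2
        have := hπmono (βo j) α h2 h1
        rwa [(hβfib j hj).2] at this
      apply IH j hj
      · intro α hα
        have h1 : π α ≤ j := (hβfib j hj).2 ▸ hπmono α (βo j) hα.le (hβfib j hj).1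
        rcases lt_or_eq_of_le h1 with h' | h'
        · exact h'
        · exact absurd ((hfib j hj α).mp ⟨hα.trans (hβfib j hj).1, h'⟩).1 (not_le.mpr hα)
      · intro α α' h1 h2; exact hπmono α α' h1 (h2.trans (hβfib j hj).1)
      · intro j' hj'
        obtain ⟨α, hαδ, hπα⟩ := hπsurj j' (hj'.trans hj)
        refine ⟨α, ?_, hπα⟩
        by_contra h
        push_neg at h
        have hk := hkey α hαδ h
        rw [hπα] at hk
        exact absurd hk (not_le.mpr hj')
      · intro j' hj' α
        constructor
        · rintro ⟨h1, h2⟩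
          exact (hfib j' (hj'.trans hj) α).mp ⟨h1.trans (hβfib j hj).1, h2⟩
        · intro h
          have := (hfib j' (hj'.trans hj) α).mpr h
          refine ⟨?_, this.2⟩
          by_contra hc
          push_neg at hc
          have hk := hkey α this.1 hc
          rw [this.2] at hk
          exact absurd hk (not_le.mpr hj')
    funext x
    have h1 := hPlim f hf δ hδlim x
    have h2 := hPlim _ hg η hηlim x
    have hT : {y : X | ∃ j < η, y = P j (fun j => P (εo j) (fun γ => f (βo j + γ))) x}
        = {y : X | ∃ j < η, y = P (βo j) f x} := by
      ext y; constructor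
      · rintro ⟨j, hj, rfl⟩; exact ⟨j, hj, by rw [hsub j hj]⟩
      · rintro ⟨j, hj, rfl⟩; exact ⟨j, hj, by rw [hsub j hj]⟩
    rw [hT] at h2
    refine lubEq ?_ h1 h2
    apply ubEq
    · rintro y ⟨j, hj, rfl⟩
      exact ⟨βo j, (hβfib j hj).1, rfl⟩
    · rintro y ⟨ζ, hζ, rfl⟩
      have h1' : π ζ + 1 < η := (add_one_eq_succ (π ζ)) ▸ hηlim.succ_lt (hπlt ζ hζ)
      have hζβ : ζ ≤ βo (π ζ + 1) := by
        by_contra h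
        push_neg at h
        have := hπmono (βo (π ζ + 1)) ζ h.le hζ
        rw [(hβfib _ h1').2] at this
        have hlt : π ζ < π ζ + 1 := by rw [add_one_eq_succ]; exact lt_succ _
        exact absurd this hlt.not_ge
      exact ⟨P (βo (π ζ + 1)) f x, ⟨π ζ + 1, h1', rfl⟩,
        Pmono P hP0 hPsucc hPlim f hf _ _ hζβ x⟩
end
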